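/- arXiv:2602.08906 — 5 statements merged into one kernel-verified Lean document; each statement's English description precedes it below -/
import Mathlib

section
/- Let ψ₁,…,ψ_{n−1} be elements of the dual Z* of a Banach space Z, α ∈ (0,1), and define B̄ : ℝⁿ → (C^{0,α}([0,T];Z))* by ⟨B̄(τ), v⟩ = ∫_ℝ Σ_{i=1}^{n−1} χ̄_{[τ_i, τ_{i+1})}(t) ⟨ψ_i, V(t)⟩ dt, where V is the extension of v to ℝ by constant continuation. Then B̄ is continuously Fréchet-differentiable, with derivative ⟨B̄'(τ)h, v⟩ = Σ_{i=1}^{n−1} ⟨ψ_i, h_{i+1} V(τ_{i+1}) − h_i V(τ_i)⟩. -/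
open Set MeasureTheory Filter Topology

/-- The signed characteristic function `χ̄_{[a,b)}`. -/
noncomputable def chiBar (a b t : ℝ) : ℝ :=
  if a ≤ t ∧ t < b then 1 else if b < t ∧ t ≤ a then -1 else 0

/-- The Euclidean norm on `ℝ^m`. -/
noncomputable def eucNorm {m : ℕ} (h : Fin m → ℝ) : ℝ :=
  Real.sqrt (∑ i, (h i) ^ 2)

/-- `v : ℝ → Z` is the constant continuation to `ℝ` of an `α`-Hölder continuous function
on `[0,T]` whose `C^{0,α}` norm (sup norm plus Hölder seminorm) is at most `M`. -/
def ConstContHolderLe {Z : Type*} [NormedAddCommGroup Z] (α T M : ℝ) (v : ℝ → Z) : Prop :=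
  Continuous v ∧
  (∀ t : ℝ, v t = v (min (max t 0) T)) ∧
  ∃ C₁ C₂ : ℝ, 0 ≤ C₁ ∧ 0 ≤ C₂ ∧ C₁ + C₂ ≤ M ∧
    (∀ t ∈ Icc (0:ℝ) T, ‖v t‖ ≤ C₁) ∧
    (∀ s ∈ Icc (0:ℝ) T, ∀ t ∈ Icc (0:ℝ) T, ‖v s - v t‖ ≤ C₂ * |s - t| ^ α)

/-- The pairing `⟨B̄(τ), v⟩ = ∫_ℝ Σ_i χ̄_{[τ_i,τ_{i+1})}(t) ⟨ψ_i, V(t)⟩ dt`. -/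
noncomputable def pairB {Z : Type*} [NormedAddCommGroup Z] [NormedSpace ℝ Z] {n : ℕ}
    (ψ : Fin n → Z →L[ℝ] ℝ) (τ : Fin (n + 1) → ℝ) (v : ℝ → Z) : ℝ :=
  ∫ t : ℝ, ∑ i : Fin n, chiBar (τ i.castSucc) (τ i.succ) t * ψ i (v t)

/-- The candidate derivative pairing
`⟨B̄'(τ)h, v⟩ = Σ_i ⟨ψ_i, h_{i+1} V(τ_{i+1}) − h_i V(τ_i)⟩`. -/
noncomputable def pairBDeriv {Z : Type*} [NormedAddCommGroup Z] [NormedSpace ℝ Z] {n : ℕ}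
    (ψ : Fin n → Z →L[ℝ] ℝ) (τ h : Fin (n + 1) → ℝ) (v : ℝ → Z) : ℝ :=
  ∑ i : Fin n,
    (h i.succ * ψ i (v (τ i.succ)) - h i.castSucc * ψ i (v (τ i.castSucc)))

lemma abs_clamp_sub_clamp_le (T s t : ℝ) :
    |min (max s 0) T - min (max t 0) T| ≤ |s - t| := by
  have h1 := abs_min_sub_min_le_max (max s 0) T (max t 0) T
  have h2 := abs_max_sub_max_le_abs s t 0
  simp only [sub_self, abs_zero] at h1
  exact h1.trans (max_le h2 (abs_nonneg _))

lemma eucNorm_nonneg {m : ℕ} (h : Fin m → ℝ) : 0 ≤ eucNorm h := Real.sqrt_nonneg _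

lemma abs_le_eucNorm {m : ℕ} (h : Fin m → ℝ) (j : Fin m) : |h j| ≤ eucNorm h := by
  have h1 : h j ^ 2 ≤ ∑ i, h i ^ 2 :=
    Finset.single_le_sum (fun i _ => sq_nonneg (h i)) (Finset.mem_univ j)
  calc |h j| = Real.sqrt (h j ^ 2) := (Real.sqrt_sq_eq_abs _).symm
    _ ≤ eucNorm h := Real.sqrt_le_sqrt h1

lemma holder_global {Z : Type*} [NormedAddCommGroup Z] {α T : ℝ} (hT : 0 ≤ T) (hα : 0 < α)
    {v : ℝ → Z} (hv : ConstContHolderLe α T 1 v) (s t : ℝ) :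
    ‖v s - v t‖ ≤ |s - t| ^ α := by
  obtain ⟨-, hext, C₁, C₂, hC₁, hC₂, hsum, -, hH⟩ := hv
  have hs : min (max s 0) T ∈ Icc (0:ℝ) T := ⟨le_min (le_max_right _ _) hT, min_le_right _ _⟩
  have ht' : min (max t 0) T ∈ Icc (0:ℝ) T := ⟨le_min (le_max_right _ _) hT, min_le_right _ _⟩
  calc ‖v s - v t‖ = ‖v (min (max s 0) T) - v (min (max t 0) T)‖ := by rw [← hext s, ← hext t]
    _ ≤ C₂ * |min (max s 0) T - min (max t 0) T| ^ α := hH _ hs _ ht'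
    _ ≤ 1 * |s - t| ^ α := by
        refine mul_le_mul (by linarith) ?_ (by positivity) zero_le_one
        exact Real.rpow_le_rpow (abs_nonneg _) (abs_clamp_sub_clamp_le T s t) hα.le
    _ = |s - t| ^ α := one_mul _

lemma chiBar_mul_eq (a b : ℝ) (g : ℝ → ℝ) (t : ℝ) :
    chiBar a b t * g t = (Ico a b).indicator g t - (Ioc b a).indicator g t := by
  unfold chiBar
  by_cases h1 : a ≤ t ∧ t < b
  · have h2 : t ∉ Ioc b a := by
      simp only [mem_Ioc, not_and]; intro hb; linarith [h1.1, h1.2]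
    rw [if_pos h1, indicator_of_mem (mem_Ico.2 h1), indicator_of_notMem h2]; ring
  · by_cases h2 : b < t ∧ t ≤ a
    · rw [if_neg h1, if_pos h2, indicator_of_notMem (by simpa [mem_Ico] using h1),
        indicator_of_mem (mem_Ioc.2 h2)]; ring
    · rw [if_neg h1, if_neg h2, indicator_of_notMem (by simpa [mem_Ico] using h1),
        indicator_of_notMem (by simpa [mem_Ioc] using h2)]; ring

lemma integrable_chiBar_mul (a b : ℝ) {g : ℝ → ℝ} (hg : Continuous g) :
    Integrable (fun t => chiBar a b t * g t) := by
  have e : (fun t => chiBar a b t * g t)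
      = fun t => (Ico a b).indicator g t - (Ioc b a).indicator g t :=
    funext (chiBar_mul_eq a b g)
  rw [e]
  exact ((integrable_indicator_iff measurableSet_Ico).2
      ((hg.integrableOn_Icc).mono_set Ico_subset_Icc_self)).sub
    ((integrable_indicator_iff measurableSet_Ioc).2
      ((hg.integrableOn_Icc).mono_set Ioc_subset_Icc_self))

lemma integral_chiBar_mul (a b : ℝ) {g : ℝ → ℝ} (hg : Continuous g) :
    ∫ t : ℝ, chiBar a b t * g t = ∫ t in a..b, g t := by
  simp_rw [chiBar_mul_eq a b g]
  rw [integral_sub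
      ((integrable_indicator_iff measurableSet_Ico).2
        ((hg.integrableOn_Icc).mono_set Ico_subset_Icc_self))
      ((integrable_indicator_iff measurableSet_Ioc).2
        ((hg.integrableOn_Icc).mono_set Ioc_subset_Icc_self)),
    integral_indicator measurableSet_Ico, integral_indicator measurableSet_Ioc]
  rcases le_total a b with hab | hab
  · rw [Ioc_eq_empty (not_lt.2 hab)]
    simp [intervalIntegral.integral_of_le hab, integral_Ico_eq_integral_Ioo,
      integral_Ioc_eq_integral_Ioo]
  · rw [Ico_eq_empty (not_lt.2 hab)]
    rw [intervalIntegral.integral_symm, intervalIntegral.integral_of_le hab]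
    simp

lemma abs_sub_le_abs_add_abs' (x y : ℝ) : |x - y| ≤ |x| + |y| := by
  calc |x - y| = |x + (-y)| := by rw [sub_eq_add_neg]
    _ ≤ |x| + |-y| := abs_add_le _ _
    _ = |x| + |y| := by rw [abs_neg]

lemma interval_err {g : ℝ → ℝ} (hg : Continuous g) {K α : ℝ} (hK : 0 ≤ K) (hα : 0 ≤ α)
    (hH : ∀ s t : ℝ, |g s - g t| ≤ K * |s - t| ^ α) (b h : ℝ) :
    |(∫ t in b..(b + h), g t) - h * g b| ≤ K * |h| ^ α * |h| := by
  have h1 : (∫ t in b..(b + h), g t) - h * g b = ∫ t in b..(b + h), (g t - g b) := by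
    rw [intervalIntegral.integral_sub (hg.intervalIntegrable _ _) intervalIntegrable_const,
      intervalIntegral.integral_const]
    simp
  rw [h1]
  have hb : ∀ t ∈ Set.uIoc b (b + h), ‖g t - g b‖ ≤ K * |h| ^ α := by
    intro t ht
    rw [Real.norm_eq_abs]
    refine (hH t b).trans (mul_le_mul_of_nonneg_left ?_ hK)
    refine Real.rpow_le_rpow (abs_nonneg _) ?_ hα
    rcases le_total 0 h with hh | hh
    · rw [Set.uIoc_of_le (by linarith)] at ht
      rw [abs_le]
      constructor
      · have := abs_nonneg h; linarith [ht.1]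
      · have := le_abs_self h; linarith [ht.2]
    · rw [Set.uIoc_of_ge (by linarith)] at ht
      rw [abs_le]
      constructor
      · have := neg_abs_le h; linarith [ht.1]
      · have := abs_nonneg h; linarith [ht.2]
  have := intervalIntegral.norm_integral_le_of_norm_le_const hb
  simpa using this

lemma interval_diff {g : ℝ → ℝ} (hg : Continuous g) (a b ha hb : ℝ) :
    (∫ t in (a + ha)..(b + hb), g t) - (∫ t in a..b, g t) - (hb * g b - ha * g a)
    = ((∫ t in b..(b + hb), g t) - hb * g b)
      - ((∫ t in a..(a + ha), g t) - ha * g a) := by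
  have hint : ∀ x y : ℝ, IntervalIntegrable g volume x y := fun x y => hg.intervalIntegrable x y
  have h1 : (∫ t in (a + ha)..a, g t) + (∫ t in a..(b + hb), g t)
      = ∫ t in (a + ha)..(b + hb), g t :=
    intervalIntegral.integral_add_adjacent_intervals (hint _ _) (hint _ _)
  have h2 : (∫ t in a..b, g t) + (∫ t in b..(b + hb), g t) = ∫ t in a..(b + hb), g t :=
    intervalIntegral.integral_add_adjacent_intervals (hint _ _) (hint _ _)
  have h3 : (∫ t in (a + ha)..a, g t) = - ∫ t in a..(a + ha), g t :=
    intervalIntegral.integral_symm _ _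
  linarith

lemma pairB_eq {Z : Type*} [NormedAddCommGroup Z] [NormedSpace ℝ Z] {n : ℕ}
    (ψ : Fin n → Z →L[ℝ] ℝ) (τ : Fin (n + 1) → ℝ) {v : ℝ → Z} (hv : Continuous v) :
    pairB ψ τ v = ∑ i : Fin n, ∫ t in (τ i.castSucc)..(τ i.succ), ψ i (v t) := by
  unfold pairB
  rw [integral_finset_sum _ fun i _ =>
    integrable_chiBar_mul (g := fun t => ψ i (v t)) (τ i.castSucc) (τ i.succ)
      ((ψ i).continuous.comp hv)]
  exact Finset.sum_congr rfl fun i _ =>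
    integral_chiBar_mul (g := fun t => ψ i (v t)) (τ i.castSucc) (τ i.succ)
      ((ψ i).continuous.comp hv)

lemma psi_holder {Z : Type*} [NormedAddCommGroup Z] [NormedSpace ℝ Z] {α T : ℝ}
    (hT : 0 ≤ T) (hα : 0 < α) {v : ℝ → Z} (hv : ConstContHolderLe α T 1 v)
    (ψ : Z →L[ℝ] ℝ) (s t : ℝ) :
    |ψ (v s) - ψ (v t)| ≤ ‖ψ‖ * |s - t| ^ α := by
  calc |ψ (v s) - ψ (v t)| = ‖ψ (v s - v t)‖ := by rw [← map_sub, Real.norm_eq_abs]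
    _ ≤ ‖ψ‖ * ‖v s - v t‖ := ψ.le_opNorm _
    _ ≤ ‖ψ‖ * |s - t| ^ α :=
        mul_le_mul_of_nonneg_left (holder_global hT hα hv s t) (norm_nonneg _)

/-- `B̄` is continuously Fréchet-differentiable from `ℝⁿ` into the dual of
`C^{0,α}([0,T];Z)`, with derivative `B̄'(τ)h` given by `pairBDeriv`.  Both the
differentiability and the continuity of `τ ↦ B̄'(τ)` are expressed via the dual norm,
i.e. uniformly over `v` in the unit ball of `C^{0,α}([0,T];Z)` (realized as constant
continuations). -/
theorem stmt3 {Z : Type*} [NormedAddCommGroup Z] [NormedSpace ℝ Z] (n : ℕ)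
    (T α : ℝ) (hT : 0 < T) (hα : α ∈ Set.Ioo (0:ℝ) 1) (ψ : Fin n → Z →L[ℝ] ℝ) :
    (∀ τ : Fin (n + 1) → ℝ, ∀ ε > (0:ℝ), ∃ δ > (0:ℝ), ∀ h : Fin (n + 1) → ℝ,
      eucNorm h < δ → ∀ v : ℝ → Z, ConstContHolderLe α T 1 v →
        |pairB ψ (τ + h) v - pairB ψ τ v - pairBDeriv ψ τ h v| ≤ ε * eucNorm h) ∧
    (∀ τ : Fin (n + 1) → ℝ, ∀ ε > (0:ℝ), ∃ δ > (0:ℝ), ∀ σ : Fin (n + 1) → ℝ,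
      eucNorm (σ - τ) < δ → ∀ h : Fin (n + 1) → ℝ, ∀ v : ℝ → Z,
        ConstContHolderLe α T 1 v →
        |pairBDeriv ψ σ h v - pairBDeriv ψ τ h v| ≤ ε * eucNorm h) := by
  obtain ⟨hα0, hα1⟩ := hα
  have hT0 : (0:ℝ) ≤ T := hT.le
  set K := ∑ i : Fin n, ‖ψ i‖ with hKdef
  have hK : 0 ≤ K := Finset.sum_nonneg fun i _ => norm_nonneg _
  have h2K : (0:ℝ) < 2 * K + 1 := by linarith
  constructor
  · intro τ ε hε
    set c := ε / (2 * K + 1) with hc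
    have hc0 : 0 < c := by positivity
    refine ⟨c ^ (1/α), Real.rpow_pos_of_pos hc0 _, ?_⟩
    intro h hh v hv
    have hδα : (c ^ (1/α)) ^ α = c := by
      rw [← Real.rpow_mul hc0.le, one_div_mul_cancel hα0.ne', Real.rpow_one]
    have hN0 : 0 ≤ eucNorm h := eucNorm_nonneg h
    have hja : ∀ j : Fin (n + 1), |h j| ^ α ≤ c := fun j => by
      calc |h j| ^ α ≤ (c ^ (1/α)) ^ α :=
          Real.rpow_le_rpow (abs_nonneg _) ((abs_le_eucNorm h j).trans hh.le) hα0.le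
        _ = c := hδα
    have key : pairB ψ (τ + h) v - pairB ψ τ v - pairBDeriv ψ τ h v
        = ∑ i : Fin n,
          (((∫ t in (τ i.succ)..(τ i.succ + h i.succ), ψ i (v t))
              - h i.succ * ψ i (v (τ i.succ)))
            - ((∫ t in (τ i.castSucc)..(τ i.castSucc + h i.castSucc), ψ i (v t))
              - h i.castSucc * ψ i (v (τ i.castSucc)))) := by
      rw [pairB_eq ψ (τ + h) hv.1, pairB_eq ψ τ hv.1]
      unfold pairBDeriv
      rw [← Finset.sum_sub_distrib, ← Finset.sum_sub_distrib]
      refine Finset.sum_congr rfl fun i _ => ?_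
      have hd := interval_diff (g := fun t => ψ i (v t)) ((ψ i).continuous.comp hv.1)
        (τ i.castSucc) (τ i.succ) (h i.castSucc) (h i.succ)
      simp only [Pi.add_apply]
      linarith
    rw [key]
    have hterm : ∀ i : Fin n,
        |(((∫ t in (τ i.succ)..(τ i.succ + h i.succ), ψ i (v t))
              - h i.succ * ψ i (v (τ i.succ)))
            - ((∫ t in (τ i.castSucc)..(τ i.castSucc + h i.castSucc), ψ i (v t))
              - h i.castSucc * ψ i (v (τ i.castSucc))))|
          ≤ 2 * (c * eucNorm h) * ‖ψ i‖ := by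
      intro i
      have e1 := interval_err (g := fun t => ψ i (v t)) ((ψ i).continuous.comp hv.1)
        (norm_nonneg (ψ i)) hα0.le (psi_holder hT0 hα0 hv (ψ i)) (τ i.succ) (h i.succ)
      have e2 := interval_err (g := fun t => ψ i (v t)) ((ψ i).continuous.comp hv.1)
        (norm_nonneg (ψ i)) hα0.le (psi_holder hT0 hα0 hv (ψ i)) (τ i.castSucc) (h i.castSucc)
      have b1 : ‖ψ i‖ * |h i.succ| ^ α * |h i.succ| ≤ ‖ψ i‖ * c * eucNorm h :=
        mul_le_mul (mul_le_mul_of_nonneg_left (hja _) (norm_nonneg _))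
          (abs_le_eucNorm h _) (abs_nonneg _) (by positivity)
      have b2 : ‖ψ i‖ * |h i.castSucc| ^ α * |h i.castSucc| ≤ ‖ψ i‖ * c * eucNorm h :=
        mul_le_mul (mul_le_mul_of_nonneg_left (hja _) (norm_nonneg _))
          (abs_le_eucNorm h _) (abs_nonneg _) (by positivity)
      calc |(((∫ t in (τ i.succ)..(τ i.succ + h i.succ), ψ i (v t))
              - h i.succ * ψ i (v (τ i.succ)))
            - ((∫ t in (τ i.castSucc)..(τ i.castSucc + h i.castSucc), ψ i (v t))
              - h i.castSucc * ψ i (v (τ i.castSucc))))|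
          ≤ |(∫ t in (τ i.succ)..(τ i.succ + h i.succ), ψ i (v t))
              - h i.succ * ψ i (v (τ i.succ))|
            + |(∫ t in (τ i.castSucc)..(τ i.castSucc + h i.castSucc), ψ i (v t))
              - h i.castSucc * ψ i (v (τ i.castSucc))| := abs_sub_le_abs_add_abs' _ _
        _ ≤ ‖ψ i‖ * c * eucNorm h + ‖ψ i‖ * c * eucNorm h :=
            add_le_add (e1.trans b1) (e2.trans b2)
        _ = 2 * (c * eucNorm h) * ‖ψ i‖ := by ring
    calc |∑ i : Fin n,
          (((∫ t in (τ i.succ)..(τ i.succ + h i.succ), ψ i (v t))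
              - h i.succ * ψ i (v (τ i.succ)))
            - ((∫ t in (τ i.castSucc)..(τ i.castSucc + h i.castSucc), ψ i (v t))
              - h i.castSucc * ψ i (v (τ i.castSucc))))|
        ≤ ∑ i : Fin n,
          |(((∫ t in (τ i.succ)..(τ i.succ + h i.succ), ψ i (v t))
              - h i.succ * ψ i (v (τ i.succ)))
            - ((∫ t in (τ i.castSucc)..(τ i.castSucc + h i.castSucc), ψ i (v t))
              - h i.castSucc * ψ i (v (τ i.castSucc))))| := Finset.abs_sum_le_sum_abs _ _
      _ ≤ ∑ i : Fin n, 2 * (c * eucNorm h) * ‖ψ i‖ := Finset.sum_le_sum fun i _ => hterm i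
      _ = 2 * (c * eucNorm h) * K := by rw [← Finset.mul_sum]
      _ ≤ ε * eucNorm h := by
          have hce : c * (2 * K + 1) = ε := div_mul_cancel₀ ε h2K.ne'
          nlinarith [mul_nonneg hc0.le hN0]
  · intro τ ε hε
    set c := ε / (2 * K + 1) with hc
    have hc0 : 0 < c := by positivity
    refine ⟨c ^ (1/α), Real.rpow_pos_of_pos hc0 _, ?_⟩
    intro σ hσ h v hv
    have hδα : (c ^ (1/α)) ^ α = c := by
      rw [← Real.rpow_mul hc0.le, one_div_mul_cancel hα0.ne', Real.rpow_one]
    have hN0 : 0 ≤ eucNorm h := eucNorm_nonneg h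
    have hja : ∀ j : Fin (n + 1), |σ j - τ j| ^ α ≤ c := fun j => by
      have h1 : |σ j - τ j| ≤ eucNorm (σ - τ) := by
        simpa using abs_le_eucNorm (σ - τ) j
      calc |σ j - τ j| ^ α ≤ (c ^ (1/α)) ^ α :=
          Real.rpow_le_rpow (abs_nonneg _) (h1.trans hσ.le) hα0.le
        _ = c := hδα
    unfold pairBDeriv
    rw [← Finset.sum_sub_distrib]
    have hterm : ∀ i : Fin n,
        |(h i.succ * ψ i (v (σ i.succ)) - h i.castSucc * ψ i (v (σ i.castSucc)))
          - (h i.succ * ψ i (v (τ i.succ)) - h i.castSucc * ψ i (v (τ i.castSucc)))|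
        ≤ 2 * (c * eucNorm h) * ‖ψ i‖ := by
      intro i
      have b1 : |ψ i (v (σ i.succ)) - ψ i (v (τ i.succ))| ≤ ‖ψ i‖ * c :=
        (psi_holder hT0 hα0 hv (ψ i) _ _).trans
          (mul_le_mul_of_nonneg_left (hja i.succ) (norm_nonneg _))
      have b2 : |ψ i (v (σ i.castSucc)) - ψ i (v (τ i.castSucc))| ≤ ‖ψ i‖ * c :=
        (psi_holder hT0 hα0 hv (ψ i) _ _).trans
          (mul_le_mul_of_nonneg_left (hja i.castSucc) (norm_nonneg _))
      calc |(h i.succ * ψ i (v (σ i.succ)) - h i.castSucc * ψ i (v (σ i.castSucc)))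
          - (h i.succ * ψ i (v (τ i.succ)) - h i.castSucc * ψ i (v (τ i.castSucc)))|
          = |h i.succ * (ψ i (v (σ i.succ)) - ψ i (v (τ i.succ)))
              - h i.castSucc * (ψ i (v (σ i.castSucc)) - ψ i (v (τ i.castSucc)))| := by
            congr 1; ring
        _ ≤ |h i.succ * (ψ i (v (σ i.succ)) - ψ i (v (τ i.succ)))|
            + |h i.castSucc * (ψ i (v (σ i.castSucc)) - ψ i (v (τ i.castSucc)))| :=
            abs_sub_le_abs_add_abs' _ _
        _ = |h i.succ| * |ψ i (v (σ i.succ)) - ψ i (v (τ i.succ))|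
            + |h i.castSucc| * |ψ i (v (σ i.castSucc)) - ψ i (v (τ i.castSucc))| := by
            rw [abs_mul, abs_mul]
        _ ≤ eucNorm h * (‖ψ i‖ * c) + eucNorm h * (‖ψ i‖ * c) :=
            add_le_add (mul_le_mul (abs_le_eucNorm h _) b1 (abs_nonneg _) hN0)
              (mul_le_mul (abs_le_eucNorm h _) b2 (abs_nonneg _) hN0)
        _ = 2 * (c * eucNorm h) * ‖ψ i‖ := by ring
    calc |∑ i : Fin n,
          ((h i.succ * ψ i (v (σ i.succ)) - h i.castSucc * ψ i (v (σ i.castSucc)))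
          - (h i.succ * ψ i (v (τ i.succ)) - h i.castSucc * ψ i (v (τ i.castSucc))))|
        ≤ ∑ i : Fin n,
          |(h i.succ * ψ i (v (σ i.succ)) - h i.castSucc * ψ i (v (σ i.castSucc)))
          - (h i.succ * ψ i (v (τ i.succ)) - h i.castSucc * ψ i (v (τ i.castSucc)))| :=
          Finset.abs_sum_le_sum_abs _ _
      _ ≤ ∑ i : Fin n, 2 * (c * eucNorm h) * ‖ψ i‖ := Finset.sum_le_sum fun i _ => hterm i
      _ = 2 * (c * eucNorm h) * K := by rw [← Finset.mul_sum]
      _ ≤ ε * eucNorm h := by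
          have hce : c * (2 * K + 1) = ε := div_mul_cancel₀ ε h2K.ne'
          nlinarith [mul_nonneg hc0.le hN0]
end

section
/- Let 𝒫 = {τ ∈ ℝⁿ : 0 ≤ τ₁ ≤ τ₂ ≤ … ≤ τ_n ≤ T} with T > 0. Given τ ∈ ℝⁿ, define indices 0 = m₀ < m₁ < … < m_ℓ = n recursively by m_{i+1} = min argmin_{m_i < j ≤ n} σ_{m_i+1, j}, where σ_{j,k} = (1/(k−j+1)) Σ_{r=j}^k τ_r, and set τ̂_j = σ_{m_i+1, m_{i+1}} for m_i < j ≤ m_{i+1}. Then the Euclidean projection of τ onto 𝒫 equals (max(min(τ̂_j, T), 0))_{j=1}^n. -/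
/-- `σ_{j,k} = (1/(k−j+1)) Σ_{r=j}^k τ_r`. -/
noncomputable def sigmaAvg (τ : ℕ → ℝ) (j k : ℕ) : ℝ :=
  (∑ r ∈ Finset.Icc j k, τ r) / ((k - j + 1 : ℕ) : ℝ)

/-- The smallest index `j ∈ (m, n]` minimizing `σ_{m+1, j}` (and `n` once `m ≥ n`). -/
noncomputable def nextIdx (τ : ℕ → ℝ) (n m : ℕ) : ℕ :=
  if m < n then
    sInf {j | m < j ∧ j ≤ n ∧
      ∀ k, m < k → k ≤ n → sigmaAvg τ (m + 1) j ≤ sigmaAvg τ (m + 1) k}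
  else n

/-- The block endpoints `0 = m₀ < m₁ < … < m_ℓ = n` of the recursive averaging scheme. -/
noncomputable def mIdx (τ : ℕ → ℝ) (n : ℕ) : ℕ → ℕ
  | 0 => 0
  | i + 1 => nextIdx τ n (mIdx τ n i)

/-- The index `i` of the block containing `j`, i.e. with `m_i < j ≤ m_{i+1}`. -/
noncomputable def blockOf (τ : ℕ → ℝ) (n j : ℕ) : ℕ :=
  sInf {i | j ≤ mIdx τ n (i + 1)}

/-- `τ̂_j = σ_{m_i+1, m_{i+1}}` for `m_i < j ≤ m_{i+1}`. -/
noncomputable def tauHat (τ : ℕ → ℝ) (n j : ℕ) : ℝ :=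
  sigmaAvg τ (mIdx τ n (blockOf τ n j) + 1) (mIdx τ n (blockOf τ n j + 1))

/-- Membership in the feasible polyhedron `𝒫 = {0 ≤ t₁ ≤ … ≤ t_n ≤ T}`
(components indexed by `1, …, n`). -/
def Feas (n : ℕ) (T : ℝ) (t : ℕ → ℝ) : Prop :=
  0 ≤ t 1 ∧ (∀ j, 1 ≤ j → j < n → t j ≤ t (j + 1)) ∧ t n ≤ T

namespace Stmt9

variable (τ : ℕ → ℝ) (n : ℕ)

lemma sum_eq_sigma (j k : ℕ) :
    ∑ r ∈ Finset.Icc j k, τ r = ((k - j + 1 : ℕ) : ℝ) * sigmaAvg τ j k := by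
  have h : ((k - j + 1 : ℕ) : ℝ) ≠ 0 := by positivity
  rw [sigmaAvg]
  field_simp

lemma nextIdx_spec (m : ℕ) (h : m < n) :
    m < nextIdx τ n m ∧ nextIdx τ n m ≤ n ∧
      ∀ k, m < k → k ≤ n → sigmaAvg τ (m + 1) (nextIdx τ n m) ≤ sigmaAvg τ (m + 1) k := by
  have hne : {j | m < j ∧ j ≤ n ∧
      ∀ k, m < k → k ≤ n → sigmaAvg τ (m + 1) j ≤ sigmaAvg τ (m + 1) k}.Nonempty := by
    obtain ⟨j, hj, hmin⟩ := Finset.exists_min_image (Finset.Ioc m n)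
      (fun k => sigmaAvg τ (m + 1) k) ⟨n, by simp [h]⟩
    rw [Finset.mem_Ioc] at hj
    exact ⟨j, hj.1, hj.2, fun k hk1 hk2 => hmin k (Finset.mem_Ioc.2 ⟨hk1, hk2⟩)⟩
  have hmem := Nat.sInf_mem hne
  unfold nextIdx
  rw [if_pos h]
  exact hmem

lemma mIdx_le : ∀ i, mIdx τ n i ≤ n
  | 0 => Nat.zero_le n
  | (i + 1) => by
      by_cases h : mIdx τ n i < n
      · exact (nextIdx_spec τ n _ h).2.1
      · show nextIdx τ n (mIdx τ n i) ≤ n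
        unfold nextIdx; rw [if_neg h]

lemma mIdx_le_succ (i : ℕ) : mIdx τ n i ≤ mIdx τ n (i + 1) := by
  by_cases h : mIdx τ n i < n
  · exact (nextIdx_spec τ n _ h).1.le
  · have he : mIdx τ n i = n := le_antisymm (mIdx_le τ n i) (not_lt.1 h)
    show mIdx τ n i ≤ nextIdx τ n (mIdx τ n i)
    unfold nextIdx; rw [if_neg h, he]

lemma mIdx_mono : Monotone (mIdx τ n) := monotone_nat_of_le_succ (mIdx_le_succ τ n)

lemma mIdx_succ_of_eq (i : ℕ) (h : mIdx τ n i = n) : mIdx τ n (i + 1) = n := by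
  show nextIdx τ n (mIdx τ n i) = n
  unfold nextIdx; rw [if_neg (by omega)]

lemma le_mIdx_or (i : ℕ) : i ≤ mIdx τ n i ∨ mIdx τ n i = n := by
  induction i with
  | zero => left; exact Nat.zero_le _
  | succ i ih =>
    by_cases h : mIdx τ n i < n
    · left
      have h1 : mIdx τ n i < mIdx τ n (i + 1) := (nextIdx_spec τ n _ h).1
      rcases ih with h2 | h2
      · omega
      · omega
    · right
      exact mIdx_succ_of_eq τ n i (le_antisymm (mIdx_le τ n i) (not_lt.1 h))

lemma mIdx_n : mIdx τ n n = n := by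
  rcases le_mIdx_or τ n n with h | h
  · exact le_antisymm (mIdx_le τ n n) h
  · exact h

lemma blockOf_spec (j : ℕ) (h1 : 1 ≤ j) (h2 : j ≤ n) :
    mIdx τ n (blockOf τ n j) < j ∧ j ≤ mIdx τ n (blockOf τ n j + 1) := by
  have hne : {i | j ≤ mIdx τ n (i + 1)}.Nonempty :=
    ⟨n, by simp only [Set.mem_setOf_eq, mIdx_succ_of_eq τ n n (mIdx_n τ n)]; exact h2⟩
  have hmem := Nat.sInf_mem hne
  refine ⟨?_, hmem⟩
  rcases Nat.eq_zero_or_pos (blockOf τ n j) with h0 | h0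
  · rw [h0]; show mIdx τ n 0 < j; exact h1
  · have hlt : blockOf τ n j - 1 < blockOf τ n j := by omega
    have hnot := Nat.notMem_of_lt_sInf hlt
    simp only [Set.mem_setOf_eq, not_le] at hnot
    calc mIdx τ n (blockOf τ n j) = mIdx τ n (blockOf τ n j - 1 + 1) := by congr 1; omega
    _ < j := hnot

lemma blockOf_eq (b j : ℕ) (h1 : mIdx τ n b < j) (h2 : j ≤ mIdx τ n (b + 1)) :
    blockOf τ n j = b := by
  refine le_antisymm (Nat.sInf_le h2) ?_
  by_contra hc
  push_neg at hc
  have hmem := Nat.sInf_mem (⟨b, h2⟩ : {i | j ≤ mIdx τ n (i + 1)}.Nonempty)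
  simp only [Set.mem_setOf_eq] at hmem
  have hmem' : j ≤ mIdx τ n (blockOf τ n j + 1) := hmem
  have : mIdx τ n (blockOf τ n j + 1) ≤ mIdx τ n b := mIdx_mono τ n (by omega)
  omega

lemma tauHat_block (b j : ℕ) (h1 : mIdx τ n b < j) (h2 : j ≤ mIdx τ n (b + 1)) :
    tauHat τ n j = sigmaAvg τ (mIdx τ n b + 1) (mIdx τ n (b + 1)) := by
  unfold tauHat
  rw [blockOf_eq τ n b j h1 h2]


-- Block facts. Assume m = mIdx b < n, e = mIdx (b+1), c = block average.
lemma factA (m e : ℕ) (hm : m < n) (he : e = nextIdx τ n m) (j : ℕ)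
    (hj1 : m < j) (hj2 : j ≤ e) :
    ∑ r ∈ Finset.Icc (m + 1) j, (sigmaAvg τ (m + 1) e - τ r) ≤ 0 := by
  obtain ⟨h1, h2, h3⟩ := nextIdx_spec τ n m hm
  rw [← he] at h1 h2 h3
  have hmin := h3 j hj1 (le_trans hj2 h2)
  have hsum := sum_eq_sigma τ (m + 1) j
  have hd : (j - (m + 1) + 1 : ℕ) = j - m := by omega
  have hcard : (Finset.Icc (m + 1) j).card = j - m := by
    rw [Nat.card_Icc]; omega
  rw [Finset.sum_sub_distrib, Finset.sum_const, hcard, hsum, hd, nsmul_eq_mul]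
  have hdpos : (0:ℝ) ≤ ((j - m : ℕ) : ℝ) := by positivity
  nlinarith [mul_le_mul_of_nonneg_left hmin hdpos]

lemma factB (m e : ℕ) (hm : m < n) (he : e = nextIdx τ n m) :
    ∑ r ∈ Finset.Icc (m + 1) e, (sigmaAvg τ (m + 1) e - τ r) = 0 := by
  obtain ⟨h1, h2, h3⟩ := nextIdx_spec τ n m hm
  rw [← he] at h1 h2 h3
  have hsum := sum_eq_sigma τ (m + 1) e
  have hd : (e - (m + 1) + 1 : ℕ) = e - m := by omega
  have hcard : (Finset.Icc (m + 1) e).card = e - m := by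
    rw [Nat.card_Icc]; omega
  rw [Finset.sum_sub_distrib, Finset.sum_const, hcard, hsum, hd, nsmul_eq_mul]
  ring

lemma factC (m e : ℕ) (hm : m < n) (he : e = nextIdx τ n m) (j : ℕ)
    (hj1 : m < j) (hj2 : j ≤ e) :
    0 ≤ ∑ r ∈ Finset.Icc j e, (sigmaAvg τ (m + 1) e - τ r) := by
  have hB := factB τ n m e hm he
  rcases eq_or_lt_of_le (show m + 1 ≤ j by omega) with h | h
  · rw [← h, hB]
  · -- m + 1 < j, so split Icc (m+1) e = Icc (m+1) (j-1) ∪ Icc j e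
    have hA := factA τ n m e hm he (j - 1) (by omega) (by omega)
    have hsplit : ∑ r ∈ Finset.Ioc m (j-1), (sigmaAvg τ (m + 1) e - τ r)
        + ∑ r ∈ Finset.Ioc (j-1) e, (sigmaAvg τ (m + 1) e - τ r)
        = ∑ r ∈ Finset.Ioc m e, (sigmaAvg τ (m + 1) e - τ r) :=
      Finset.sum_Ioc_consecutive _ (by omega) (by omega)
    rw [← Finset.Icc_add_one_left_eq_Ioc, ← Finset.Icc_add_one_left_eq_Ioc, ← Finset.Icc_add_one_left_eq_Ioc] at hsplit
    rw [show j - 1 + 1 = j by omega] at hsplit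
    rw [hB] at hsplit
    linarith

lemma block_mono (b : ℕ) (hb : mIdx τ n b < n) (hb2 : mIdx τ n (b + 1) < n) :
    sigmaAvg τ (mIdx τ n b + 1) (mIdx τ n (b + 1))
      ≤ sigmaAvg τ (mIdx τ n (b + 1) + 1) (mIdx τ n (b + 2)) := by
  set m := mIdx τ n b with hmdef
  set e := mIdx τ n (b + 1) with hedef
  set e' := mIdx τ n (b + 2) with he'def
  obtain ⟨h1, h2, h3⟩ := nextIdx_spec τ n m hb
  have hee : e = nextIdx τ n m := rfl
  rw [← hee] at h1 h2 h3
  obtain ⟨g1, g2, g3⟩ := nextIdx_spec τ n e hb2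
  have hee' : e' = nextIdx τ n e := rfl
  rw [← hee'] at g1 g2 g3
  have hmin := h3 e' (by omega) g2
  set c := sigmaAvg τ (m + 1) e with hc
  set c' := sigmaAvg τ (e + 1) e' with hc'
  have hs1 : ∑ r ∈ Finset.Icc (m+1) e, τ r = ((e - (m+1) + 1 : ℕ) : ℝ) * c := sum_eq_sigma τ _ _
  have hs2 : ∑ r ∈ Finset.Icc (e+1) e', τ r = ((e' - (e+1) + 1 : ℕ) : ℝ) * c' := sum_eq_sigma τ _ _
  have hs3 : ∑ r ∈ Finset.Icc (m+1) e', τ r = ((e' - (m+1) + 1 : ℕ) : ℝ) * sigmaAvg τ (m+1) e' :=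
    sum_eq_sigma τ _ _
  have hsplit : ∑ r ∈ Finset.Ioc m e, τ r + ∑ r ∈ Finset.Ioc e e', τ r
      = ∑ r ∈ Finset.Ioc m e', τ r := Finset.sum_Ioc_consecutive _ (by omega) (by omega)
  rw [← Finset.Icc_add_one_left_eq_Ioc, ← Finset.Icc_add_one_left_eq_Ioc, ← Finset.Icc_add_one_left_eq_Ioc] at hsplit
  rw [hs1, hs2, hs3] at hsplit
  have hL : ((e - (m+1) + 1 : ℕ) : ℝ) = ((e - m : ℕ) : ℝ) := by congr 1; omega
  have hL' : ((e' - (e+1) + 1 : ℕ) : ℝ) = ((e' - e : ℕ) : ℝ) := by congr 1; omega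
  have hLL : ((e' - (m+1) + 1 : ℕ) : ℝ) = ((e - m : ℕ) : ℝ) + ((e' - e : ℕ) : ℝ) := by
    rw [show (e' - (m+1) + 1 : ℕ) = (e - m) + (e' - e) by omega, Nat.cast_add]
  rw [hL, hL', hLL] at hsplit
  have hLpos : (0:ℝ) ≤ ((e - m : ℕ) : ℝ) := by positivity
  have hL'pos : (0:ℝ) < ((e' - e : ℕ) : ℝ) := by
    have : 0 < e' - e := by omega
    exact_mod_cast this
  have hmin' : (((e - m : ℕ) : ℝ) + ((e' - e : ℕ) : ℝ)) * c
      ≤ (((e - m : ℕ) : ℝ) + ((e' - e : ℕ) : ℝ)) * sigmaAvg τ (m+1) e' :=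
    mul_le_mul_of_nonneg_left hmin (by positivity)
  nlinarith


lemma abel_prefix (f t : ℕ → ℝ) (c : ℝ) (s : ℕ) :
    ∀ e, s ≤ e →
    (∀ j, s ≤ j → j ≤ e → ∑ r ∈ Finset.Icc s j, f r ≤ 0) →
    (∀ j, s ≤ j → j < e → t j ≤ t (j + 1)) →
    (∑ r ∈ Finset.Icc s e, f r) * (t e - c) ≤ ∑ j ∈ Finset.Icc s e, f j * (t j - c) := by
  intro e
  induction e with
  | zero =>
    intro hse _ _
    have : s = 0 := by omega
    subst this
    simp
  | succ e ih =>
    intro hse hpre hmono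
    rcases eq_or_lt_of_le hse with h | h
    · rw [← h]
      simp
    · have hse' : s ≤ e := by omega
      have htop : ∑ r ∈ Finset.Icc s (e + 1), f r = (∑ r ∈ Finset.Icc s e, f r) + f (e + 1) :=
        Finset.sum_Icc_succ_top (by omega) f
      have htop2 : ∑ j ∈ Finset.Icc s (e + 1), f j * (t j - c)
          = (∑ j ∈ Finset.Icc s e, f j * (t j - c)) + f (e + 1) * (t (e + 1) - c) :=
        Finset.sum_Icc_succ_top (by omega) _
      have hih := ih hse' (fun j h1 h2 => hpre j h1 (by omega))
        (fun j h1 h2 => hmono j h1 (by omega))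
      have hP : ∑ r ∈ Finset.Icc s e, f r ≤ 0 := hpre e hse' (by omega)
      have hte : t e ≤ t (e + 1) := hmono e hse' (by omega)
      rw [htop, htop2]
      nlinarith

lemma abel_suffix (f t : ℕ → ℝ) (c : ℝ) (e : ℕ) :
    ∀ k s, s + k = e →
    (∀ j, s < j → j ≤ e → 0 ≤ ∑ r ∈ Finset.Icc j e, f r) →
    (∀ j, s ≤ j → j < e → t j ≤ t (j + 1)) →
    (∑ r ∈ Finset.Icc s e, f r) * (t s - c) ≤ ∑ j ∈ Finset.Icc s e, f j * (t j - c) := by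
  intro k
  induction k with
  | zero =>
    intro s hs _ _
    have : s = e := by omega
    subst this
    simp
  | succ k ih =>
    intro s hs hsuf hmono
    have hse : s < e := by omega
    have hnotmem : s ∉ Finset.Icc (s + 1) e := by simp
    have hcons : Finset.Icc s e = insert s (Finset.Icc (s + 1) e) := by
      ext r
      simp only [Finset.mem_Icc, Finset.mem_insert]
      omega
    have hih := ih (s + 1) (by omega) (fun j h1 h2 => hsuf j (by omega) h2)
      (fun j h1 h2 => hmono j (by omega) h2)
    have hQ : 0 ≤ ∑ r ∈ Finset.Icc (s + 1) e, f r := hsuf (s + 1) (by omega) (by omega)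
    have hts : t s ≤ t (s + 1) := hmono s le_rfl hse
    rw [hcons, Finset.sum_insert hnotmem, Finset.sum_insert hnotmem]
    nlinarith

lemma feas_mono (T : ℝ) (t : ℕ → ℝ) (ht : ∀ j, 1 ≤ j → j < n → t j ≤ t (j + 1)) :
    ∀ a b, 1 ≤ a → a ≤ b → b ≤ n → t a ≤ t b := by
  intro a b ha hab
  induction b with
  | zero => omega
  | succ b ihb =>
    intro hbn
    rcases eq_or_lt_of_le hab with h | h
    · rw [h]
    · exact le_trans (ihb (by omega) (by omega)) (ht b (by omega) (by omega))


lemma block_VI (T : ℝ) (hT : 0 < T) (t : ℕ → ℝ) (ht : Feas n T t)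
    (b : ℕ) (hb : mIdx τ n b < n) :
    0 ≤ ∑ j ∈ Finset.Icc (mIdx τ n b + 1) (mIdx τ n (b + 1)),
        (max (min (tauHat τ n j) T) 0 - τ j) * (t j - max (min (tauHat τ n j) T) 0) := by
  set m := mIdx τ n b with hmdef
  set e := mIdx τ n (b + 1) with hedef
  have hee : e = nextIdx τ n m := rfl
  obtain ⟨h1, h2, h3⟩ := nextIdx_spec τ n m hb
  rw [← hee] at h1 h2 h3
  set c := sigmaAvg τ (m + 1) e with hc
  have hhat : ∀ j ∈ Finset.Icc (m + 1) e, tauHat τ n j = c := by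
    intro j hj
    rw [Finset.mem_Icc] at hj
    exact tauHat_block τ n b j (by omega) hj.2
  have hrw : ∑ j ∈ Finset.Icc (m + 1) e,
        (max (min (tauHat τ n j) T) 0 - τ j) * (t j - max (min (tauHat τ n j) T) 0)
      = ∑ j ∈ Finset.Icc (m + 1) e,
        (max (min c T) 0 - τ j) * (t j - max (min c T) 0) :=
    Finset.sum_congr rfl (fun j hj => by rw [hhat j hj])
  rw [hrw]
  obtain ⟨ht0, htm, htT⟩ := ht
  have hmono' : ∀ j, m + 1 ≤ j → j < e → t j ≤ t (j + 1) :=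
    fun j hj1 hj2 => htm j (by omega) (by omega)
  have htle : ∀ j, m + 1 ≤ j → j ≤ e → t j ≤ T :=
    fun j hj1 hj2 => le_trans (feas_mono n T t htm j n (by omega) (by omega) le_rfl) htT
  have htge : ∀ j, m + 1 ≤ j → j ≤ e → 0 ≤ t j :=
    fun j hj1 hj2 => le_trans ht0 (feas_mono n T t htm 1 j le_rfl (by omega) (by omega))
  rcases le_or_gt c 0 with hc0 | hc0
  · -- clipped to 0
    have hx : max (min c T) 0 = 0 := by
      rw [min_eq_left (le_trans hc0 hT.le), max_eq_right hc0]
    rw [hx]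
    have hsuf : ∀ j, m + 1 < j → j ≤ e → 0 ≤ ∑ r ∈ Finset.Icc j e, (0 - τ r) := by
      intro j hj1 hj2
      have hC := factC τ n m e hb hee j (by omega) hj2
      have : ∑ r ∈ Finset.Icc j e, (c - τ r) ≤ ∑ r ∈ Finset.Icc j e, (0 - τ r) :=
        Finset.sum_le_sum (fun r _ => by linarith)
      linarith
    have htotal : 0 ≤ ∑ r ∈ Finset.Icc (m + 1) e, (0 - τ r) := by
      have hC := factC τ n m e hb hee (m + 1) (by omega) (by omega)
      have : ∑ r ∈ Finset.Icc (m + 1) e, (c - τ r) ≤ ∑ r ∈ Finset.Icc (m + 1) e, (0 - τ r) :=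
        Finset.sum_le_sum (fun r _ => by linarith)
      linarith
    have key := abel_suffix (fun r => 0 - τ r) t 0 e (e - (m + 1)) (m + 1) (by omega)
      hsuf hmono'
    have hts : 0 ≤ t (m + 1) - 0 := by
      have := htge (m + 1) le_rfl (by omega); linarith
    calc (0:ℝ) ≤ (∑ r ∈ Finset.Icc (m + 1) e, (0 - τ r)) * (t (m + 1) - 0) :=
          mul_nonneg htotal hts
    _ ≤ ∑ j ∈ Finset.Icc (m + 1) e, (0 - τ j) * (t j - 0) := key
  rcases le_or_gt c T with hcT | hcT
  · -- no clipping
    have hx : max (min c T) 0 = c := by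
      rw [min_eq_left hcT, max_eq_left hc0.le]
    rw [hx]
    have hpre : ∀ j, m + 1 ≤ j → j ≤ e → ∑ r ∈ Finset.Icc (m + 1) j, (c - τ r) ≤ 0 :=
      fun j hj1 hj2 => factA τ n m e hb hee j (by omega) hj2
    have key := abel_prefix (fun r => c - τ r) t c (m + 1) e (by omega) hpre hmono'
    have hB := factB τ n m e hb hee
    rw [hB] at key
    simpa using key
  · -- clipped to T
    have hx : max (min c T) 0 = T := by
      rw [min_eq_right hcT.le, max_eq_left hT.le]
    rw [hx]
    have hpre : ∀ j, m + 1 ≤ j → j ≤ e → ∑ r ∈ Finset.Icc (m + 1) j, (T - τ r) ≤ 0 := by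
      intro j hj1 hj2
      have hA := factA τ n m e hb hee j (by omega) hj2
      have : ∑ r ∈ Finset.Icc (m + 1) j, (T - τ r) ≤ ∑ r ∈ Finset.Icc (m + 1) j, (c - τ r) :=
        Finset.sum_le_sum (fun r _ => by linarith)
      linarith
    have key := abel_prefix (fun r => T - τ r) t T (m + 1) e (by omega) hpre hmono'
    have htotal : ∑ r ∈ Finset.Icc (m + 1) e, (T - τ r) ≤ 0 := by
      have hB := factB τ n m e hb hee
      have : ∑ r ∈ Finset.Icc (m + 1) e, (T - τ r) ≤ ∑ r ∈ Finset.Icc (m + 1) e, (c - τ r) :=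
        Finset.sum_le_sum (fun r _ => by linarith)
      linarith
    have hte : t e - T ≤ 0 := by
      have := htle e (by omega) le_rfl; linarith
    calc (0:ℝ) ≤ (∑ r ∈ Finset.Icc (m + 1) e, (T - τ r)) * (t e - T) :=
          by nlinarith
    _ ≤ ∑ j ∈ Finset.Icc (m + 1) e, (T - τ j) * (t j - T) := key


lemma VI (T : ℝ) (hT : 0 < T) (t : ℕ → ℝ) (ht : Feas n T t) :
    0 ≤ ∑ j ∈ Finset.Icc 1 n,
        (max (min (tauHat τ n j) T) 0 - τ j) * (t j - max (min (tauHat τ n j) T) 0) := by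
  have claim : ∀ b, 0 ≤ ∑ j ∈ Finset.Icc 1 (mIdx τ n b),
      (max (min (tauHat τ n j) T) 0 - τ j) * (t j - max (min (tauHat τ n j) T) 0) := by
    intro b
    induction b with
    | zero => simp [mIdx]
    | succ b ih =>
      by_cases hb : mIdx τ n b < n
      · have hsplit : ∑ j ∈ Finset.Ioc 0 (mIdx τ n b),
              (max (min (tauHat τ n j) T) 0 - τ j) * (t j - max (min (tauHat τ n j) T) 0)
            + ∑ j ∈ Finset.Ioc (mIdx τ n b) (mIdx τ n (b + 1)),
              (max (min (tauHat τ n j) T) 0 - τ j) * (t j - max (min (tauHat τ n j) T) 0)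
            = ∑ j ∈ Finset.Ioc 0 (mIdx τ n (b + 1)),
              (max (min (tauHat τ n j) T) 0 - τ j) * (t j - max (min (tauHat τ n j) T) 0) :=
          Finset.sum_Ioc_consecutive _ (Nat.zero_le _) (mIdx_le_succ τ n b)
        rw [← Finset.Icc_add_one_left_eq_Ioc, ← Finset.Icc_add_one_left_eq_Ioc, ← Finset.Icc_add_one_left_eq_Ioc] at hsplit
        simp only [Nat.succ_eq_add_one, Nat.zero_add] at hsplit
        rw [← hsplit]
        have hblock := block_VI τ n T hT t ht b hb
        exact add_nonneg ih hblock
      · have heq : mIdx τ n (b + 1) = mIdx τ n b := by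
          have h := le_antisymm (mIdx_le τ n b) (not_lt.1 hb)
          rw [mIdx_succ_of_eq τ n b h, h]
        rw [heq]
        exact ih
  have := claim n
  rwa [mIdx_n] at this

lemma tauHat_step (j : ℕ) (h1 : 1 ≤ j) (h2 : j < n) :
    tauHat τ n j ≤ tauHat τ n (j + 1) := by
  obtain ⟨hb1, hb2⟩ := blockOf_spec τ n j h1 (le_of_lt h2)
  set b := blockOf τ n j with hbdef
  rcases le_or_gt (j + 1) (mIdx τ n (b + 1)) with h | h
  · rw [tauHat_block τ n b j hb1 hb2, tauHat_block τ n b (j + 1) (by omega) h]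
  · have hji : mIdx τ n (b + 1) = j := by omega
    have hbn : mIdx τ n (b + 1) < n := by omega
    have hnext : mIdx τ n (b + 1) < mIdx τ n (b + 1 + 1) := by
      have hee : mIdx τ n (b + 1 + 1) = nextIdx τ n (mIdx τ n (b + 1)) := rfl
      rw [hee]
      exact (nextIdx_spec τ n _ hbn).1
    rw [tauHat_block τ n b j hb1 hb2,
      tauHat_block τ n (b + 1) (j + 1) (by omega) (by omega)]
    exact block_mono τ n b (by omega) hbn

end Stmt9

/-- The Euclidean projection of `τ` onto `𝒫` equals `(max(min(τ̂_j, T), 0))_{j=1}^n`: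
this clipped vector is feasible and (strictly) minimizes the squared Euclidean
distance to `τ` among all feasible vectors. -/


theorem stmt9 (n : ℕ) (hn : 1 ≤ n) (T : ℝ) (hT : 0 < T) (τ : ℕ → ℝ) :
    Feas n T (fun j => max (min (tauHat τ n j) T) 0) ∧
    (∀ t : ℕ → ℝ, Feas n T t →
      ∑ j ∈ Finset.Icc 1 n, (max (min (tauHat τ n j) T) 0 - τ j) ^ 2
        ≤ ∑ j ∈ Finset.Icc 1 n, (t j - τ j) ^ 2) ∧
    (∀ t : ℕ → ℝ, Feas n T t →
      ∑ j ∈ Finset.Icc 1 n, (t j - τ j) ^ 2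
          = ∑ j ∈ Finset.Icc 1 n, (max (min (tauHat τ n j) T) 0 - τ j) ^ 2 →
        ∀ j ∈ Finset.Icc 1 n, t j = max (min (tauHat τ n j) T) 0) := by
  set x : ℕ → ℝ := fun j => max (min (tauHat τ n j) T) 0 with hxdef
  have hid : ∀ t : ℕ → ℝ,
      ∑ j ∈ Finset.Icc 1 n, (t j - τ j) ^ 2
        = ∑ j ∈ Finset.Icc 1 n, (x j - τ j) ^ 2
          + 2 * (∑ j ∈ Finset.Icc 1 n, (x j - τ j) * (t j - x j))
          + ∑ j ∈ Finset.Icc 1 n, (t j - x j) ^ 2 := by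
    intro t
    rw [Finset.mul_sum, ← Finset.sum_add_distrib, ← Finset.sum_add_distrib]
    exact Finset.sum_congr rfl (fun j _ => by ring)
  refine ⟨⟨?_, ?_, ?_⟩, ?_, ?_⟩
  · exact le_max_right _ _
  · intro j hj1 hj2
    have hstep := Stmt9.tauHat_step τ n j hj1 hj2
    exact max_le_max (min_le_min hstep le_rfl) le_rfl
  · exact max_le (min_le_right _ _) hT.le
  · intro t ht
    have hvi := Stmt9.VI τ n T hT t ht
    have hsq : 0 ≤ ∑ j ∈ Finset.Icc 1 n, (t j - x j) ^ 2 :=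
      Finset.sum_nonneg (fun j _ => sq_nonneg _)
    have := hid t
    try simp only [← hxdef] at this ⊢
    linarith
  · intro t ht heq
    have hvi := Stmt9.VI τ n T hT t ht
    have hsq : 0 ≤ ∑ j ∈ Finset.Icc 1 n, (t j - x j) ^ 2 :=
      Finset.sum_nonneg (fun j _ => sq_nonneg _)
    have hidt := hid t
    try simp only [← hxdef] at heq
    have hzero : ∑ j ∈ Finset.Icc 1 n, (t j - x j) ^ 2 = 0 := by linarith
    intro j hj
    have hall := (Finset.sum_eq_zero_iff_of_nonneg (fun j _ => sq_nonneg (t j - x j))).1 hzero j hj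
    have : t j - x j = 0 := by
      have := sq_eq_zero_iff.1 hall
      exact this
    linarith
end

section
/- With τ̂ defined by the pool-adjacent-violators-type recursive averaging scheme (τ̂_j = σ_{m_i+1, m_{i+1}} for m_i < j ≤ m_{i+1}, where m_{i+1} = min argmin_{m_i<j≤n} σ_{m_i+1,j}), the vector τ̂ is monotone: τ̂₁ ≤ τ̂₂ ≤ … ≤ τ̂_n. -/
lemma sigmaAvg_eq (τ : ℕ → ℝ) {a b : ℕ} (h : a < b) :
    sigmaAvg τ (a + 1) b = (∑ r ∈ Finset.Ioc a b, τ r) / ((b - a : ℕ) : ℝ) := by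
  rw [sigmaAvg, Finset.Icc_add_one_left_eq_Ioc]
  congr 2
  omega

lemma nextIdx_spec (τ : ℕ → ℝ) {n m : ℕ} (h : m < n) :
    m < nextIdx τ n m ∧ nextIdx τ n m ≤ n ∧
      ∀ k, m < k → k ≤ n → sigmaAvg τ (m + 1) (nextIdx τ n m) ≤ sigmaAvg τ (m + 1) k := by
  rw [nextIdx, if_pos h]
  obtain ⟨j, hj, hmin⟩ := Finset.exists_min_image (Finset.Ioc m n)
    (fun j => sigmaAvg τ (m + 1) j) ⟨n, by simp [h]⟩
  simp only [Finset.mem_Ioc] at hj hmin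
  have hne : {j | m < j ∧ j ≤ n ∧
      ∀ k, m < k → k ≤ n → sigmaAvg τ (m + 1) j ≤ sigmaAvg τ (m + 1) k}.Nonempty :=
    ⟨j, hj.1, hj.2, fun k hk1 hk2 => hmin k ⟨hk1, hk2⟩⟩
  exact Nat.sInf_mem hne

lemma nextIdx_le (τ : ℕ → ℝ) (n m : ℕ) : nextIdx τ n m ≤ n := by
  by_cases h : m < n
  · exact (nextIdx_spec τ h).2.1
  · rw [nextIdx, if_neg h]

lemma mIdx_le (τ : ℕ → ℝ) (n : ℕ) : ∀ i, mIdx τ n i ≤ n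
  | 0 => Nat.zero_le n
  | i + 1 => nextIdx_le τ n _

lemma mIdx_lt_succ (τ : ℕ → ℝ) {n : ℕ} {i : ℕ} (h : mIdx τ n i < n) :
    mIdx τ n i < mIdx τ n (i + 1) :=
  (nextIdx_spec τ h).1

lemma mIdx_mono (τ : ℕ → ℝ) (n : ℕ) : Monotone (mIdx τ n) := by
  apply monotone_nat_of_le_succ
  intro i
  by_cases h : mIdx τ n i < n
  · exact (mIdx_lt_succ τ h).le
  · have : mIdx τ n i = n := le_antisymm (mIdx_le τ n i) (not_lt.mp h)
    show mIdx τ n i ≤ nextIdx τ n (mIdx τ n i)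
    rw [nextIdx, if_neg h, this]

lemma min_le_mIdx (τ : ℕ → ℝ) (n : ℕ) : ∀ i, min i n ≤ mIdx τ n i := by
  intro i
  induction i with
  | zero => simp [mIdx]
  | succ i ih =>
    show min (i + 1) n ≤ mIdx τ n (i + 1)
    by_cases h : mIdx τ n i < n
    · have := mIdx_lt_succ τ h
      omega
    · have h1 : mIdx τ n i = n := le_antisymm (mIdx_le τ n i) (not_lt.mp h)
      have := mIdx_mono τ n (show i ≤ i + 1 by omega)
      omega

lemma blockOf_spec (τ : ℕ → ℝ) {n k : ℕ} (hk1 : 1 ≤ k) (hkn : k ≤ n) :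
    mIdx τ n (blockOf τ n k) < k ∧ k ≤ mIdx τ n (blockOf τ n k + 1) := by
  have hne : {i | k ≤ mIdx τ n (i + 1)}.Nonempty := by
    refine ⟨n, ?_⟩
    have := min_le_mIdx τ n (n + 1)
    simp only [Set.mem_setOf_eq]
    omega
  have hmem : k ≤ mIdx τ n (blockOf τ n k + 1) := Nat.sInf_mem hne
  refine ⟨?_, hmem⟩
  by_contra hc
  push_neg at hc
  rcases Nat.eq_zero_or_eq_succ_pred (blockOf τ n k) with h0 | hs
  · rw [h0] at hc; simp [mIdx] at hc; omega
  · have : (blockOf τ n k - 1) ∈ {i | k ≤ mIdx τ n (i + 1)} := by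
      simp only [Set.mem_setOf_eq]
      have : blockOf τ n k - 1 + 1 = blockOf τ n k := by omega
      rw [this]; exact hc
    have h2 := Nat.sInf_le this
    change blockOf τ n k ≤ blockOf τ n k - 1 at h2
    omega

lemma blockOf_mono (τ : ℕ → ℝ) (n : ℕ) {j k : ℕ} (hjk : j ≤ k) (hk1 : 1 ≤ k)
    (hkn : k ≤ n) : blockOf τ n j ≤ blockOf τ n k := by
  have hmem : k ≤ mIdx τ n (blockOf τ n k + 1) := (blockOf_spec τ hk1 hkn).2
  exact Nat.sInf_le (le_trans hjk hmem)

/-- Key averaging inequality: if the average over `(a,b]` is at most the average over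
`(a,c]` with `a < b < c`, then it is at most the average over `(b,c]`. -/
lemma key_step (τ : ℕ → ℝ) {n : ℕ} {i : ℕ} (hb : mIdx τ n (i + 1) < n) :
    sigmaAvg τ (mIdx τ n i + 1) (mIdx τ n (i + 1)) ≤
      sigmaAvg τ (mIdx τ n (i + 1) + 1) (mIdx τ n (i + 2)) := by
  set a := mIdx τ n i with ha
  set b := mIdx τ n (i + 1) with hbdef
  set c := mIdx τ n (i + 2) with hc
  have han : a < n := lt_of_le_of_lt (mIdx_mono τ n (Nat.le_succ i)) hb
  have hab : a < b := mIdx_lt_succ τ han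
  have hbc : b < c := mIdx_lt_succ τ hb
  have hcn : c ≤ n := mIdx_le τ n _
  -- b minimizes σ_{a+1,·} over (a, n]
  have hmin := (nextIdx_spec τ han).2.2 c (lt_trans hab hbc) hcn
  have hbn : nextIdx τ n a = b := rfl
  rw [hbn] at hmin
  -- rewrite averages
  have heq1 : sigmaAvg τ (a + 1) b = (∑ r ∈ Finset.Ioc a b, τ r) / ((b - a : ℕ) : ℝ) :=
    sigmaAvg_eq τ hab
  have heq2 : sigmaAvg τ (a + 1) c = (∑ r ∈ Finset.Ioc a c, τ r) / ((c - a : ℕ) : ℝ) :=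
    sigmaAvg_eq τ (lt_trans hab hbc)
  have heq3 : sigmaAvg τ (b + 1) c = (∑ r ∈ Finset.Ioc b c, τ r) / ((c - b : ℕ) : ℝ) :=
    sigmaAvg_eq τ hbc
  have hsplit : (∑ r ∈ Finset.Ioc a b, τ r) + (∑ r ∈ Finset.Ioc b c, τ r)
      = ∑ r ∈ Finset.Ioc a c, τ r :=
    Finset.sum_Ioc_consecutive τ hab.le hbc.le
  set A := ∑ r ∈ Finset.Ioc a b, τ r
  set B := ∑ r ∈ Finset.Ioc b c, τ r
  have hp : (0 : ℝ) < ((b - a : ℕ) : ℝ) := by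
    exact_mod_cast Nat.sub_pos_of_lt hab
  have hq : (0 : ℝ) < ((c - b : ℕ) : ℝ) := by
    exact_mod_cast Nat.sub_pos_of_lt hbc
  have hpq : ((c - a : ℕ) : ℝ) = ((b - a : ℕ) : ℝ) + ((c - b : ℕ) : ℝ) := by
    push_cast [Nat.cast_sub hab.le, Nat.cast_sub hbc.le,
      Nat.cast_sub (le_trans hab.le hbc.le)]
    ring
  rw [heq1, heq2, ← hsplit, hpq] at hmin
  rw [heq1, heq3]
  set p := ((b - a : ℕ) : ℝ)
  set q := ((c - b : ℕ) : ℝ)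
  rw [div_le_div_iff₀ hp (by linarith)] at hmin
  rw [div_le_div_iff₀ hp hq]
  nlinarith

lemma chain (τ : ℕ → ℝ) (n : ℕ) :
    ∀ i₂ i₁, i₁ ≤ i₂ → mIdx τ n i₂ < n →
      sigmaAvg τ (mIdx τ n i₁ + 1) (mIdx τ n (i₁ + 1)) ≤
        sigmaAvg τ (mIdx τ n i₂ + 1) (mIdx τ n (i₂ + 1)) := by
  intro i₂
  induction i₂ with
  | zero => intro i₁ h _; interval_cases i₁; rfl
  | succ i₂ ih =>
    intro i₁ h hlt
    rcases Nat.lt_or_ge i₁ (i₂ + 1) with h' | h'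
    · have hmi : mIdx τ n i₂ < n := lt_of_le_of_lt (mIdx_mono τ n (Nat.le_succ i₂)) hlt
      exact le_trans (ih i₁ (Nat.lt_succ_iff.mp h') hmi) (key_step τ hlt)
    · have : i₁ = i₂ + 1 := le_antisymm h h'
      rw [this]

/-- The vector `τ̂` produced by the recursive averaging scheme is monotone:
`τ̂₁ ≤ τ̂₂ ≤ … ≤ τ̂_n`. -/
theorem stmt10 (n : ℕ) (hn : 1 ≤ n) (τ : ℕ → ℝ) :
    ∀ j k : ℕ, 1 ≤ j → j ≤ k → k ≤ n → tauHat τ n j ≤ tauHat τ n k := by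
  intro j k hj hjk hkn
  have hk1 : 1 ≤ k := le_trans hj hjk
  have hbk := blockOf_spec τ hk1 hkn
  have hb := blockOf_mono τ n hjk hk1 hkn
  unfold tauHat
  exact chain τ n (blockOf τ n k) (blockOf τ n j) hb (lt_of_lt_of_le hbk.1 hkn)
end

section
/- Let g : ℝ → ℝ be continuously differentiable with g'(0)ψ₁ ≠ 0, and let τ̄ ∈ (0,T). Define F : ℝ² → ℝ by F(τ) = g(y_τ(min{max{τ₂,0},T})), where y_τ is the solution of y' = χ_{[τ₁,τ₂)}ψ₁, y(0)=0. Then at τ = (τ̄, τ̄), the one-sided directional derivative of F in direction (0,1) equals g'(0)ψ₁, while in direction (0,−1) it equals 0; hence F is not Gâteaux differentiable at (τ̄, τ̄). -/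
open Set Filter Topology

/-- The explicit solution of `y' = χ_{[τ₁,τ₂)} ψ`, `y(0) = 0`. -/
noncomputable def ySol (T ψ τ₁ τ₂ : ℝ) : ℝ → ℝ := fun t =>
  if τ₁ ≤ τ₂ ∧ 0 < τ₂ ∧ τ₁ < T then
    if t < τ₁ then 0
    else if t < τ₂ then ψ * (t - max τ₁ 0)
    else ψ * (τ₂ - max τ₁ 0)
  else 0

/-- `F(τ) = g(y_τ(min{max{τ₂,0},T}))`: point evaluation at the (clipped) switching
point `τ₂`. -/
noncomputable def F13 (T ψ : ℝ) (g : ℝ → ℝ) (τ : ℝ × ℝ) : ℝ :=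
  g (ySol T ψ τ.1 τ.2 (min (max τ.2 0) T))

lemma F13_center (T ψ τb : ℝ) (g : ℝ → ℝ) (hτ : τb ∈ Set.Ioo 0 T) :
    F13 T ψ g (τb, τb) = g 0 := by
  obtain ⟨h0, hT⟩ := hτ
  simp only [F13, ySol]
  rw [if_pos ⟨le_rfl, h0, hT⟩]
  have hmax : max τb 0 = τb := max_eq_left h0.le
  have hmin : min (max τb 0) T = τb := by rw [hmax]; exact min_eq_left hT.le
  rw [hmin, if_neg (lt_irrefl τb), if_neg (lt_irrefl τb), hmax]
  ring_nf

lemma F13_pos (T ψ τb s : ℝ) (g : ℝ → ℝ) (hτ : τb ∈ Set.Ioo 0 T)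
    (hs : 0 < s) (hsT : τb + s ≤ T) :
    F13 T ψ g (τb, τb + s) = g (ψ * s) := by
  obtain ⟨h0, hT⟩ := hτ
  simp only [F13, ySol]
  rw [if_pos ⟨by linarith, by linarith, hT⟩]
  have hmax : max (τb + s) 0 = τb + s := max_eq_left (by linarith)
  have hmin : min (max (τb + s) 0) T = τb + s := by rw [hmax]; exact min_eq_left hsT
  rw [hmin, if_neg (by linarith), if_neg (lt_irrefl _)]
  rw [max_eq_left h0.le]
  ring_nf

lemma F13_neg (T ψ τb s : ℝ) (g : ℝ → ℝ) (hτ : τb ∈ Set.Ioo 0 T) (hs : 0 < s) :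
    F13 T ψ g (τb, τb - s) = g 0 := by
  simp only [F13, ySol]
  rw [if_neg]
  rintro ⟨h1, -, -⟩
  linarith

/-- At `τ = (τ̄, τ̄)`, the one-sided derivative of `F` in direction `(0,1)` equals
`g'(0)ψ₁`, in direction `(0,−1)` it equals `0`; hence `F` is not Gâteaux
differentiable at `(τ̄, τ̄)`. -/
theorem stmt13 (T ψ τb : ℝ) (hT : 0 < T) (hψ : ψ ≠ 0) (g : ℝ → ℝ)
    (hg : ContDiff ℝ 1 g) (hg0 : deriv g 0 * ψ ≠ 0) (hτ : τb ∈ Ioo 0 T) :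
    Tendsto (fun s : ℝ => (F13 T ψ g (τb, τb + s) - F13 T ψ g (τb, τb)) / s)
      (𝓝[>] 0) (𝓝 (deriv g 0 * ψ)) ∧
    Tendsto (fun s : ℝ => (F13 T ψ g (τb, τb - s) - F13 T ψ g (τb, τb)) / s)
      (𝓝[>] 0) (𝓝 0) ∧
    ¬ ∃ D : ℝ × ℝ →ₗ[ℝ] ℝ, ∀ h : ℝ × ℝ,
        Tendsto (fun ρ : ℝ =>
            (F13 T ψ g (τb + ρ * h.1, τb + ρ * h.2) - F13 T ψ g (τb, τb)) / ρ)
          (𝓝[>] 0) (𝓝 (D h)) := by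
  have hgd : HasDerivAt g (deriv g 0) (ψ * 0) := by
    rw [mul_zero]
    exact ((hg.differentiable one_ne_zero) 0).hasDerivAt
  have hmul : HasDerivAt (fun s : ℝ => ψ * s) ψ 0 := by
    simpa using (hasDerivAt_id (0 : ℝ)).const_mul ψ
  have hcomp : HasDerivAt (fun s : ℝ => g (ψ * s)) (deriv g 0 * ψ) 0 :=
    hgd.comp 0 hmul
  have hslope : Tendsto (fun s : ℝ => (g (ψ * s) - g 0) / s) (𝓝[>] 0)
      (𝓝 (deriv g 0 * ψ)) := by
    have := (hasDerivAt_iff_tendsto_slope.mp hcomp).mono_left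
      (nhdsWithin_mono 0 (fun x (hx : 0 < x) => ne_of_gt hx))
    refine this.congr (fun s => ?_)
    simp [slope_def_field]
  have h1 : Tendsto (fun s : ℝ => (F13 T ψ g (τb, τb + s) - F13 T ψ g (τb, τb)) / s)
      (𝓝[>] 0) (𝓝 (deriv g 0 * ψ)) := by
    apply hslope.congr'
    have hev : ∀ᶠ s in 𝓝[>] (0:ℝ), s < T - τb := by
      apply eventually_nhdsWithin_of_eventually_nhds
      exact eventually_lt_nhds (by linarith [hτ.2])
    filter_upwards [hev, self_mem_nhdsWithin] with s hsT (hs : 0 < s)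
    rw [F13_pos T ψ τb s g hτ hs (by linarith), F13_center T ψ τb g hτ]
  have h2 : Tendsto (fun s : ℝ => (F13 T ψ g (τb, τb - s) - F13 T ψ g (τb, τb)) / s)
      (𝓝[>] 0) (𝓝 0) := by
    apply tendsto_const_nhds.congr'
    filter_upwards [self_mem_nhdsWithin] with s (hs : 0 < s)
    rw [F13_neg T ψ τb s g hτ hs, F13_center T ψ τb g hτ, sub_self, zero_div]
  refine ⟨h1, h2, ?_⟩
  rintro ⟨D, hD⟩
  have hp : D (0, 1) = deriv g 0 * ψ := by
    refine tendsto_nhds_unique ((hD (0, 1)).congr (fun ρ => ?_)) h1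
    norm_num
  have hn : D (0, -1) = 0 := by
    refine tendsto_nhds_unique ((hD (0, -1)).congr (fun ρ => ?_)) h2
    norm_num [sub_eq_add_neg]
  have : D (0, -1) = -D (0, 1) := by
    rw [← D.map_neg]; norm_num
  rw [hn, hp] at this
  exact hg0 (by linarith)
end

section
/- Let g : ℝ → ℝ be continuously differentiable, τ̂ ∈ (0,T] fixed, ψ₁ ≠ 0 with g'(ψ₁ τ̂) ≠ 0. Define F(τ) = g(y_τ(τ̂)) with y_τ as above. Then at τ = (0, τ̂), the one-sided directional derivatives of F in directions (0,1) and (0,−1) are 0 and −g'(ψ₁ τ̂)ψ₁ respectively; hence F is not Gâteaux differentiable at (0, τ̂). -/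
open Set Filter Topology

/-- The explicit solution of `y' = χ_{[τ₁,τ₂)} ψ`, `y(0) = 0`, given by
`y_τ(t) = ψ (min{t,τ₂} − max{τ₁,0})⁺` in the feasible regime and `0` otherwise. -/
noncomputable def ySol14 (T ψ τ₁ τ₂ : ℝ) : ℝ → ℝ := fun t =>
  if τ₁ ≤ τ₂ ∧ 0 < τ₂ ∧ τ₁ < T then ψ * max (min t τ₂ - max τ₁ 0) 0 else 0

/-- `F(τ) = g(y_τ(τ̂))` with a fixed evaluation time `τ̂ ∈ (0,T]`: at `τ = (0, τ̂)`,
the one-sided derivatives in directions `(0,1)` and `(0,−1)` are `0` and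
`−g'(ψ τ̂)ψ` respectively; hence `F` is not Gâteaux differentiable at `(0, τ̂)`. -/
theorem stmt14 (T ψ τh : ℝ) (hT : 0 < T) (hψ : ψ ≠ 0) (g : ℝ → ℝ)
    (hg : ContDiff ℝ 1 g) (hg' : deriv g (ψ * τh) ≠ 0) (hτ : τh ∈ Ioc 0 T) :
    Tendsto (fun s : ℝ =>
        (g (ySol14 T ψ 0 (τh + s) τh) - g (ySol14 T ψ 0 τh τh)) / s)
      (𝓝[>] 0) (𝓝 0) ∧
    Tendsto (fun s : ℝ =>
        (g (ySol14 T ψ 0 (τh - s) τh) - g (ySol14 T ψ 0 τh τh)) / s)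
      (𝓝[>] 0) (𝓝 (-(deriv g (ψ * τh) * ψ))) ∧
    ¬ ∃ D : ℝ × ℝ →ₗ[ℝ] ℝ, ∀ h : ℝ × ℝ,
        Tendsto (fun ρ : ℝ =>
            (g (ySol14 T ψ (0 + ρ * h.1) (τh + ρ * h.2) τh) - g (ySol14 T ψ 0 τh τh)) / ρ)
          (𝓝[>] 0) (𝓝 (D h)) := by
  obtain ⟨hτ0, hτT⟩ := hτ
  -- value at the base point
  have hbase : ySol14 T ψ 0 τh τh = ψ * τh := by
    have hc : (0:ℝ) ≤ τh ∧ 0 < τh ∧ (0:ℝ) < T := ⟨hτ0.le, hτ0, hT⟩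
    simp only [ySol14, if_pos hc]
    rw [min_self, max_eq_left (le_refl 0), sub_zero, max_eq_left hτ0.le]
  -- value for τ₂ = τh + s, s > 0
  have hplus : ∀ s : ℝ, 0 < s → ySol14 T ψ 0 (τh + s) τh = ψ * τh := by
    intro s hs
    have hc : (0:ℝ) ≤ τh + s ∧ 0 < τh + s ∧ (0:ℝ) < T := ⟨by linarith, by linarith, hT⟩
    simp only [ySol14, if_pos hc]
    rw [min_eq_left (by linarith), max_eq_left (le_refl 0), sub_zero, max_eq_left hτ0.le]
  -- value for τ₂ = τh - s, 0 < s < τh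
  have hminus : ∀ s : ℝ, 0 < s → s < τh → ySol14 T ψ 0 (τh - s) τh = ψ * (τh - s) := by
    intro s hs hsτ
    have hc : (0:ℝ) ≤ τh - s ∧ 0 < τh - s ∧ (0:ℝ) < T := ⟨by linarith, by linarith, hT⟩
    simp only [ySol14, if_pos hc]
    rw [min_eq_right (by linarith), max_eq_left (le_refl 0), sub_zero,
      max_eq_left (by linarith)]
  -- Part 1
  have h1 : Tendsto (fun s : ℝ =>
        (g (ySol14 T ψ 0 (τh + s) τh) - g (ySol14 T ψ 0 τh τh)) / s)
      (𝓝[>] 0) (𝓝 0) := by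
    have heq : (fun s : ℝ =>
        (g (ySol14 T ψ 0 (τh + s) τh) - g (ySol14 T ψ 0 τh τh)) / s) =ᶠ[𝓝[>] (0:ℝ)]
        (fun _ => 0) := by
      filter_upwards [self_mem_nhdsWithin] with s hs
      rw [hplus s hs, hbase, sub_self, zero_div]
    exact Tendsto.congr' heq.symm tendsto_const_nhds
  -- Part 2: derivative of s ↦ g (ψ * (τh - s)) at 0
  have hdiffg : HasDerivAt g (deriv g (ψ * τh)) (ψ * τh) :=
    ((hg.differentiable one_ne_zero) (ψ * τh)).hasDerivAt
  have hinner : HasDerivAt (fun s : ℝ => ψ * (τh - s)) (-ψ) 0 := by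
    have h0 : HasDerivAt (fun s : ℝ => τh - s) (-1) 0 := by
      simpa [Pi.sub_def] using (hasDerivAt_const (0:ℝ) τh).sub (hasDerivAt_id 0)
    simpa using HasDerivAt.const_mul ψ h0
  have hcomp : HasDerivAt (fun s : ℝ => g (ψ * (τh - s)))
      (deriv g (ψ * τh) * (-ψ)) 0 := by
    have hdiffg' : HasDerivAt g (deriv g (ψ * τh)) ((fun s : ℝ => ψ * (τh - s)) 0) := by
      simpa using hdiffg
    simpa [Function.comp_def] using hdiffg'.comp 0 hinner
  have h2 : Tendsto (fun s : ℝ =>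
        (g (ySol14 T ψ 0 (τh - s) τh) - g (ySol14 T ψ 0 τh τh)) / s)
      (𝓝[>] 0) (𝓝 (-(deriv g (ψ * τh) * ψ))) := by
    have hslope : Tendsto (slope (fun s : ℝ => g (ψ * (τh - s))) 0) (𝓝[≠] 0)
        (𝓝 (deriv g (ψ * τh) * (-ψ))) := hasDerivAt_iff_tendsto_slope.mp hcomp
    have hsub : 𝓝[>] (0:ℝ) ≤ 𝓝[≠] (0:ℝ) :=
      nhdsWithin_mono 0 (fun x hx => ne_of_gt hx)
    have h2' := hslope.mono_left hsub
    have heq : ∀ᶠ s in 𝓝[>] (0:ℝ),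
        slope (fun s : ℝ => g (ψ * (τh - s))) 0 s =
        (g (ySol14 T ψ 0 (τh - s) τh) - g (ySol14 T ψ 0 τh τh)) / s := by
      filter_upwards [self_mem_nhdsWithin, Ioo_mem_nhdsGT hτ0] with s hs hs'
      rw [slope_def_field, hminus s hs hs'.2, hbase]
      simp [div_eq_inv_mul, mul_comm]
    have := Tendsto.congr' heq h2'
    convert this using 2
    ring
  refine ⟨h1, h2, ?_⟩
  rintro ⟨D, hD⟩
  have hD1 := hD (0, 1)
  have hD2 := hD (0, -1)
  simp only [mul_zero, add_zero, mul_one, zero_add] at hD1 hD2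
  have e1 : D (0, 1) = 0 := tendsto_nhds_unique hD1 h1
  have e2 : D (0, -1) = -(deriv g (ψ * τh) * ψ) := by
    refine tendsto_nhds_unique hD2 ?_
    have : ∀ ρ : ℝ, τh + ρ * (-1) = τh - ρ := fun ρ => by ring
    simpa only [this] using h2
  have : ((0:ℝ), (-1:ℝ)) = -((0:ℝ), (1:ℝ)) := by simp [Prod.ext_iff]
  rw [this, map_neg, e1, neg_zero] at e2
  exact hg' (by
    have : deriv g (ψ * τh) * ψ = 0 := by linarith [e2.symm]
    rcases mul_eq_zero.mp this with h | h
    · exact h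
    · exact absurd h hψ)
end
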